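/- arXiv:1105.4405 — 2 statements merged into one kernel-verified Lean document; each statement's English description precedes it below -/
import Mathlib

section
/- The relation ∼_r is an equivalence relation on the set of partitions, and the relation t_r^λ ≥ t_r^τ defined via the residue-counting functions is a total order on the set of equivalence classes. -/
open scoped Classical

/-- A partition, given by its weakly decreasing sequence of parts
`part 0 ≥ part 1 ≥ …` (0-indexed; `part i = λ_{i+1}`), eventually zero. -/
structure PartitionSeq where
  part : ℕ → ℕ
  antitone' : ∀ i j : ℕ, i ≤ j → part j ≤ part i
  finite' : ∃ N : ℕ, ∀ i : ℕ, N ≤ i → part i = 0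

/-- The number of (nonzero) parts `l(λ)`. -/
noncomputable def PartitionSeq.len (l : PartitionSeq) : ℕ := sInf {N | ∀ i : ℕ, N ≤ i → l.part i = 0}

/-- The β-set of `λ` of size `t` (for `t ≥ l(λ)`):
`B_t(λ) = {λ_i + t − i : 1 ≤ i ≤ t}` (with `λ_i = 0` for `i > l(λ)`). -/
def betaSet (l : PartitionSeq) (t : ℕ) : Finset ℕ :=
  (Finset.range t).image (fun i => l.part i + (t - 1 - i))

/-- The sum of the first `k` parts of `λ`. -/
def psum (l : PartitionSeq) (k : ℕ) : ℕ := ∑ i ∈ Finset.range k, l.part i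

/-- `μ` dominates `ν`: they are partitions of the same number and every
partial sum of `μ` is at least the corresponding partial sum of `ν`. -/
def dominates (μ ν : PartitionSeq) : Prop :=
  psum μ μ.len = psum ν ν.len ∧ ∀ k : ℕ, psum ν k ≤ psum μ k

/-- The elementary Jantzen move `λ → τ` (with respect to `e`). -/
def jantzenMove (e : ℕ) (l τ : PartitionSeq) : Prop :=
  ∃ a b i t : ℕ, l.len ≤ t ∧ τ.len ≤ t ∧ b < a ∧ i * e ≤ b ∧
    a ≠ b - i * e ∧ a ∈ betaSet l t ∧ b - i * e ∈ betaSet l t ∧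
    b ≠ a - i * e ∧ b ∉ betaSet l t ∧ a - i * e ∉ betaSet l t ∧
    betaSet τ t = (betaSet l t ∪ {b, a - i * e}) \ {a, b - i * e}

/-- The residue-counting function `s_{λ,r,t} : ℕ → ℕ`. -/
def sfun (e : ℕ) (r : ZMod e) (l : PartitionSeq) (t i : ℕ) : ℕ :=
  if ((i : ZMod e) - (t : ZMod e)) = r - 1 then (betaSet l t ∩ {i, i + 1}).card
  else if ((i : ZMod e) - (t : ZMod e)) = r then (betaSet l t ∩ {i, i - 1}).card
  else (betaSet l t ∩ {i}).card

/-- `λ ∼_r τ` : the functions `s_{λ,r,t}` and `s_{τ,r,t}` coincide for some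
`t ≥ l(λ), l(τ)`. -/
def simr (e : ℕ) (r : ZMod e) (l m : PartitionSeq) : Prop :=
  ∃ t : ℕ, l.len ≤ t ∧ m.len ≤ t ∧ ∀ i : ℕ, sfun e r l t i = sfun e r m t i

/-- `t_r^λ > t_r^τ` : there are `t` and `j` with `s_{λ,r,t}(i) = s_{τ,r,t}(i)`
for all `i > j` and `s_{λ,r,t}(j) > s_{τ,r,t}(j)`. -/
def tgt (e : ℕ) (r : ZMod e) (l m : PartitionSeq) : Prop :=
  ∃ t j : ℕ, l.len ≤ t ∧ m.len ≤ t ∧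
    (∀ i : ℕ, j < i → sfun e r l t i = sfun e r m t i) ∧
    sfun e r m t j < sfun e r l t j

lemma PartitionSeq.part_eq_zero (l : PartitionSeq) {t : ℕ} (h : l.len ≤ t) : l.part t = 0 := by
  have hne : {N | ∀ i : ℕ, N ≤ i → l.part i = 0}.Nonempty := l.finite'
  exact Nat.sInf_mem hne t h

lemma betaSet_succ (l : PartitionSeq) {t : ℕ} (h : l.len ≤ t) :
    betaSet l (t+1) = insert 0 ((betaSet l t).image (· + 1)) := by
  unfold betaSet
  rw [Finset.range_add_one, Finset.image_insert]
  have h0 : l.part t + (t + 1 - 1 - t) = 0 := by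
    simp [l.part_eq_zero h]
  rw [h0, Finset.image_image]
  congr 1
  apply Finset.image_congr
  intro i hi
  simp only [Finset.mem_coe, Finset.mem_range] at hi
  simp only [Function.comp]
  omega

lemma succ_mem_insert_image (B : Finset ℕ) (i : ℕ) :
    (i+1) ∈ insert 0 (B.image (· + 1)) ↔ i ∈ B := by simp

lemma card_inter_singleton (B : Finset ℕ) (x : ℕ) :
    (B ∩ {x}).card = if x ∈ B then 1 else 0 := by
  split <;> rename_i hx
  · rw [Finset.inter_comm, Finset.singleton_inter_of_mem hx, Finset.card_singleton]
  · rw [Finset.inter_comm, Finset.singleton_inter_of_notMem hx, Finset.card_empty]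

lemma card_inter_pair (B : Finset ℕ) {x y : ℕ} (h : x ≠ y) :
    (B ∩ ({x, y} : Finset ℕ)).card
      = (if x ∈ B then 1 else 0) + (if y ∈ B then 1 else 0) := by
  have hsplit : B ∩ ({x, y} : Finset ℕ) = (B ∩ {x}) ∪ (B ∩ {y}) := by
    ext z
    simp only [Finset.mem_inter, Finset.mem_insert, Finset.mem_singleton, Finset.mem_union]
    tauto
  have hdisj : Disjoint (B ∩ ({x} : Finset ℕ)) (B ∩ {y}) := by
    rw [Finset.disjoint_left]
    intro z hz hz'
    simp only [Finset.mem_inter, Finset.mem_singleton] at hz hz'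
    exact h (hz.2 ▸ hz'.2 ▸ rfl)
  rw [hsplit, Finset.card_union_of_disjoint hdisj, card_inter_singleton, card_inter_singleton]

lemma zmod_sub_one_ne {e : ℕ} (he : 2 ≤ e) (r : ZMod e) : r - 1 ≠ r := by
  haveI : Fact (1 < e) := ⟨he⟩
  intro h
  have : (1 : ZMod e) = 0 := by linear_combination -h
  exact one_ne_zero this

lemma sfun_succ_succ {e : ℕ} (he : 2 ≤ e) (r : ZMod e) (l : PartitionSeq) {t : ℕ}
    (h : l.len ≤ t) (i : ℕ) :
    sfun e r l (t+1) (i+1) =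
      sfun e r l t i + (if i = 0 ∧ ((i : ZMod e) - (t : ZMod e)) = r then 1 else 0) := by
  have hres : (((i+1 : ℕ) : ZMod e) - ((t+1 : ℕ) : ZMod e)) = (i : ZMod e) - (t : ZMod e) := by
    push_cast; ring
  unfold sfun
  rw [betaSet_succ l h, hres]
  set B := betaSet l t with hB
  set B' : Finset ℕ := insert 0 (B.image (· + 1)) with hB'
  have h0B' : 0 ∈ B' := Finset.mem_insert_self _ _
  have hmem : ∀ k : ℕ, (k+1) ∈ B' ↔ k ∈ B := fun k => succ_mem_insert_image B k
  by_cases h1 : ((i : ZMod e) - (t : ZMod e)) = r - 1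
  · have h2 : ¬ (i = 0 ∧ ((i : ZMod e) - (t : ZMod e)) = r) := by
      rintro ⟨_, hr⟩; exact zmod_sub_one_ne he r (h1.symm ▸ hr)
    rw [if_pos h1, if_pos h1, if_neg h2]
    rw [card_inter_pair B' (by omega : i+1 ≠ i+1+1), card_inter_pair B (by omega : i ≠ i+1)]
    rw [if_congr (hmem i) rfl rfl]
    have : (i + 1 + 1) = (i+1)+1 := rfl
    rw [this, if_congr (hmem (i+1)) rfl rfl]
    omega
  · rw [if_neg h1, if_neg h1]
    by_cases h2 : ((i : ZMod e) - (t : ZMod e)) = r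
    · rw [if_pos h2, if_pos h2]
      rcases Nat.eq_zero_or_pos i with hi | hi
      · subst hi
        rw [if_pos ⟨rfl, h2⟩]
        have hpair : ({0 + 1, 0 + 1 - 1} : Finset ℕ) = {1, 0} := by norm_num
        have hpair2 : ({0, 0 - 1} : Finset ℕ) = {0} := by norm_num
        rw [hpair, hpair2, card_inter_pair B' (by omega : (1:ℕ) ≠ 0), card_inter_singleton]
        rw [if_pos h0B', if_congr (hmem 0) rfl rfl]
        try omega
      · obtain ⟨k, rfl⟩ : ∃ k, i = k + 1 := ⟨i - 1, by omega⟩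
        rw [if_neg (by simp : ¬(k + 1 = 0 ∧ _))]
        have hpair : ({k + 1 + 1, k + 1 + 1 - 1} : Finset ℕ) = {k+1+1, k+1} := by norm_num
        have hpair2 : ({k + 1, k + 1 - 1} : Finset ℕ) = {k+1, k} := by norm_num
        rw [hpair, hpair2, card_inter_pair B' (by omega : k+1+1 ≠ k+1),
          card_inter_pair B (by omega : k+1 ≠ k),
          if_congr (hmem (k+1)) rfl rfl, if_congr (hmem k) rfl rfl]
        omega
    · rw [if_neg h2, if_neg h2, if_neg (by tauto)]
      rw [card_inter_singleton, card_inter_singleton, if_congr (hmem i) rfl rfl]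
      omega

lemma sfun_succ_zero {e : ℕ} (he : 2 ≤ e) (r : ZMod e) (l : PartitionSeq) {t : ℕ}
    (h : l.len ≤ t) :
    sfun e r l (t+1) 0 =
      if ((0 : ZMod e) - ((t+1 : ℕ) : ZMod e)) = r - 1 then 1 + sfun e r l t 0 else 1 := by
  unfold sfun
  rw [betaSet_succ l h]
  set B := betaSet l t with hB
  set B' : Finset ℕ := insert 0 (B.image (· + 1)) with hB'
  have h0B' : 0 ∈ B' := Finset.mem_insert_self _ _
  have hmem : ∀ k : ℕ, (k+1) ∈ B' ↔ k ∈ B := fun k => succ_mem_insert_image B k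
  have hcast : ((0 : ℕ) : ZMod e) = 0 := by norm_cast
  rw [hcast]
  by_cases h1 : ((0 : ZMod e) - ((t+1 : ℕ) : ZMod e)) = r - 1
  · rw [if_pos h1, if_pos h1]
    have hres : ((0 : ZMod e) - ((t : ℕ) : ZMod e)) = r := by
      push_cast at h1 ⊢; linear_combination h1
    rw [if_neg (show ¬ ((0:ZMod e) - (t:ZMod e)) = r - 1 from
        fun hh => zmod_sub_one_ne he r (hh ▸ hres)), if_pos hres]
    have hpair2 : ({0, 0 - 1} : Finset ℕ) = {0} := by norm_num
    rw [hpair2, card_inter_pair B' (by omega : (0:ℕ) ≠ 0+1), card_inter_singleton,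
      if_pos h0B', if_congr (hmem 0) rfl rfl]
  · rw [if_neg h1]
    by_cases h2 : ((0 : ZMod e) - ((t+1 : ℕ) : ZMod e)) = r
    · rw [if_pos h2]
      have hpair2 : ({0, 0 - 1} : Finset ℕ) = {0} := by norm_num
      rw [hpair2, card_inter_singleton, if_pos h0B', if_neg h1]
    · rw [if_neg h2, card_inter_singleton, if_pos h0B', if_neg h1]

/-- Step lemma: pointwise equality of `sfun` propagates from `t` to `t+1`. -/
lemma sfun_eq_succ {e : ℕ} (he : 2 ≤ e) (r : ZMod e) {l m : PartitionSeq} {t : ℕ}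
    (hl : l.len ≤ t) (hm : m.len ≤ t) (h : ∀ i, sfun e r l t i = sfun e r m t i) :
    ∀ i, sfun e r l (t+1) i = sfun e r m (t+1) i := by
  intro i
  cases i with
  | zero => rw [sfun_succ_zero he r l hl, sfun_succ_zero he r m hm, h 0]
  | succ k => rw [sfun_succ_succ he r l hl k, sfun_succ_succ he r m hm k, h k]

lemma sfun_eq_of_le {e : ℕ} (he : 2 ≤ e) (r : ZMod e) {l m : PartitionSeq} {t T : ℕ}
    (hl : l.len ≤ t) (hm : m.len ≤ t) (h : ∀ i, sfun e r l t i = sfun e r m t i)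
    (hT : t ≤ T) : ∀ i, sfun e r l T i = sfun e r m T i := by
  induction T, hT using Nat.le_induction with
  | base => exact h
  | succ n hn ih => exact sfun_eq_succ he r (hl.trans hn) (hm.trans hn) ih

/-- The `tgt` relation witnessed at a given `t` and `j`. -/
def tgtAt (e : ℕ) (r : ZMod e) (l m : PartitionSeq) (t j : ℕ) : Prop :=
  l.len ≤ t ∧ m.len ≤ t ∧
    (∀ i : ℕ, j < i → sfun e r l t i = sfun e r m t i) ∧
    sfun e r m t j < sfun e r l t j

lemma tgt_iff {e : ℕ} {r : ZMod e} {l m : PartitionSeq} :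
    tgt e r l m ↔ ∃ t j, tgtAt e r l m t j := Iff.rfl

lemma tgtAt_succ {e : ℕ} (he : 2 ≤ e) {r : ZMod e} {l m : PartitionSeq} {t j : ℕ}
    (h : tgtAt e r l m t j) : tgtAt e r l m (t+1) (j+1) := by
  obtain ⟨hl, hm, heq, hlt⟩ := h
  refine ⟨hl.trans (Nat.le_succ t), hm.trans (Nat.le_succ t), ?_, ?_⟩
  · intro i hi
    cases i with
    | zero => omega
    | succ k =>
      rw [sfun_succ_succ he r l hl k, sfun_succ_succ he r m hm k, heq k (by omega)]
  · rw [sfun_succ_succ he r l hl j, sfun_succ_succ he r m hm j]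
    have := hlt
    split <;> omega

lemma tgtAt_le {e : ℕ} (he : 2 ≤ e) {r : ZMod e} {l m : PartitionSeq} {t T j : ℕ}
    (h : tgtAt e r l m t j) (hT : t ≤ T) : ∃ j', tgtAt e r l m T j' := by
  induction T, hT using Nat.le_induction with
  | base => exact ⟨j, h⟩
  | succ n hn ih =>
    obtain ⟨j', hj'⟩ := ih
    exact ⟨j'+1, tgtAt_succ he hj'⟩

lemma betaSet_le (l : PartitionSeq) (t : ℕ) {x : ℕ} (hx : x ∈ betaSet l t) :
    x ≤ l.part 0 + t := by
  simp only [betaSet, Finset.mem_image, Finset.mem_range] at hx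
  obtain ⟨i, hi, rfl⟩ := hx
  have := l.antitone' 0 i (Nat.zero_le i)
  omega

lemma sfun_eq_zero {e : ℕ} (r : ZMod e) (l : PartitionSeq) {t i : ℕ}
    (hi : l.part 0 + t + 2 ≤ i) : sfun e r l t i = 0 := by
  have hbig : ∀ x ∈ betaSet l t, x < i - 1 := by
    intro x hx
    have := betaSet_le l t hx
    omega
  have h1 : i ∉ betaSet l t := fun h => by have := hbig i h; omega
  have h2 : i + 1 ∉ betaSet l t := fun h => by have := hbig (i+1) h; omega
  have h3 : i - 1 ∉ betaSet l t := fun h => by have := hbig (i-1) h; omega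
  unfold sfun
  split
  · rw [card_inter_pair _ (by omega : i ≠ i + 1), if_neg h1, if_neg h2]
  split
  · rw [card_inter_pair _ (by omega : i ≠ i - 1), if_neg h1, if_neg h3]
  · rw [card_inter_singleton, if_neg h1]

/-- `∼_r` is an equivalence relation on partitions, and the relation `>`
defined via the residue-counting functions induces a (strict) total order on
the set of equivalence classes: it respects `∼_r`, is transitive,
asymmetric, and satisfies trichotomy. -/
theorem simr_equivalence_tgt_totalOrder (e : ℕ) (he : 2 ≤ e) (r : ZMod e) :
    Equivalence (simr e r) ∧
    (∀ a b c d : PartitionSeq, simr e r a b → simr e r c d →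
      (tgt e r a c ↔ tgt e r b d)) ∧
    (∀ a b c : PartitionSeq, tgt e r a b → tgt e r b c → tgt e r a c) ∧
    (∀ a b : PartitionSeq, tgt e r a b → ¬ tgt e r b a) ∧
    (∀ a b : PartitionSeq, tgt e r a b ∨ tgt e r b a ∨ simr e r a b) := by
  -- a key transfer lemma
  have key : ∀ a b c d : PartitionSeq, simr e r a b → simr e r c d →
      tgt e r a c → tgt e r b d := by
    rintro a b c d ⟨t1, ha1, hb1, h1⟩ ⟨t2, hc2, hd2, h2⟩ ⟨t, j, hat, hct, heq, hlt⟩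
    set T := max t (max t1 t2) with hT
    have htT : t ≤ T := le_max_left _ _
    have ht1T : t1 ≤ T := le_trans (le_max_left _ _) (le_max_right _ _)
    have ht2T : t2 ≤ T := le_trans (le_max_right _ _) (le_max_right _ _)
    obtain ⟨j', hb', hd', heq', hlt'⟩ := tgtAt_le he (⟨hat, hct, heq, hlt⟩ : tgtAt e r a c t j) htT
    have hab : ∀ i, sfun e r a T i = sfun e r b T i := sfun_eq_of_le he r ha1 hb1 h1 ht1T
    have hcd : ∀ i, sfun e r c T i = sfun e r d T i := sfun_eq_of_le he r hc2 hd2 h2 ht2T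
    refine ⟨T, j', hb1.trans ht1T, hd2.trans ht2T, ?_, ?_⟩
    · intro i hi; rw [← hab i, ← hcd i]; exact heq' i hi
    · rw [← hab j', ← hcd j']; exact hlt'
  have simr_refl : ∀ a : PartitionSeq, simr e r a a := fun a => ⟨a.len, le_rfl, le_rfl, fun _ => rfl⟩
  have simr_symm : ∀ {a b : PartitionSeq}, simr e r a b → simr e r b a := by
    rintro a b ⟨t, ha, hb, h⟩; exact ⟨t, hb, ha, fun i => (h i).symm⟩
  have simr_trans : ∀ {a b c : PartitionSeq}, simr e r a b → simr e r b c → simr e r a c := by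
    rintro a b c ⟨t1, ha1, hb1, h1⟩ ⟨t2, hb2, hc2, h2⟩
    set T := max t1 t2 with hT
    have hab : ∀ i, sfun e r a T i = sfun e r b T i :=
      sfun_eq_of_le he r ha1 hb1 h1 (le_max_left _ _)
    have hbc : ∀ i, sfun e r b T i = sfun e r c T i :=
      sfun_eq_of_le he r hb2 hc2 h2 (le_max_right _ _)
    exact ⟨T, ha1.trans (le_max_left _ _), hc2.trans (le_max_right _ _),
      fun i => (hab i).trans (hbc i)⟩
  -- common-`t` form of `tgt`
  have tgt_common : ∀ a b : PartitionSeq, tgt e r a b → ∀ T, a.len ≤ T → b.len ≤ T →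
      ∃ T' j, T ≤ T' ∧ tgtAt e r a b T' j := by
    rintro a b ⟨t, j, hat, hbt, heq, hlt⟩ T _ _
    obtain ⟨j', hj'⟩ := tgtAt_le he (⟨hat, hbt, heq, hlt⟩ : tgtAt e r a b t j) (le_max_left t T)
    exact ⟨max t T, j', le_max_right _ _, hj'⟩
  refine ⟨⟨simr_refl, simr_symm, simr_trans⟩, ?_, ?_, ?_, ?_⟩
  · intro a b c d hab hcd
    exact ⟨key a b c d hab hcd, key b a d c (simr_symm hab) (simr_symm hcd)⟩
  · -- transitivity
    rintro a b c ⟨t1, j1, ha1, hb1, heq1, hlt1⟩ ⟨t2, j2, hb2, hc2, heq2, hlt2⟩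
    obtain ⟨j1', haT, hbT, e1, l1⟩ :=
      tgtAt_le he (⟨ha1, hb1, heq1, hlt1⟩ : tgtAt e r a b t1 j1) (le_max_left t1 t2)
    obtain ⟨j2', hbT', hcT, e2, l2⟩ :=
      tgtAt_le he (⟨hb2, hc2, heq2, hlt2⟩ : tgtAt e r b c t2 j2) (le_max_right t1 t2)
    refine ⟨max t1 t2, max j1' j2', haT, hcT, ?_, ?_⟩
    · intro i hi
      rw [e1 i (by omega), e2 i (by omega)]
    · rcases lt_trichotomy j1' j2' with h | h | h
      · rw [max_eq_right h.le]
        have := e1 j2' h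
        omega
      · subst h
        rw [max_self]
        omega
      · rw [max_eq_left h.le]
        have := e2 j1' h
        omega
  · -- asymmetry
    rintro a b ⟨t1, j1, ha1, hb1, heq1, hlt1⟩ ⟨t2, j2, hb2, ha2, heq2, hlt2⟩
    obtain ⟨j1', haT, hbT, e1, l1⟩ :=
      tgtAt_le he (⟨ha1, hb1, heq1, hlt1⟩ : tgtAt e r a b t1 j1) (le_max_left t1 t2)
    obtain ⟨j2', hbT', haT', e2, l2⟩ :=
      tgtAt_le he (⟨hb2, ha2, heq2, hlt2⟩ : tgtAt e r b a t2 j2) (le_max_right t1 t2)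
    rcases lt_trichotomy j1' j2' with h | h | h
    · have := e1 j2' h
      omega
    · subst h
      omega
    · have := e2 j1' h
      omega
  · -- trichotomy
    intro a b
    set t := max a.len b.len with ht
    have hat : a.len ≤ t := le_max_left _ _
    have hbt : b.len ≤ t := le_max_right _ _
    set M := max (a.part 0 + t) (b.part 0 + t) + 2 with hM
    have hzero : ∀ i, M ≤ i → sfun e r a t i = 0 ∧ sfun e r b t i = 0 := by
      intro i hi
      constructor
      · exact sfun_eq_zero r a (by omega)
      · exact sfun_eq_zero r b (by omega)
    by_cases hall : ∀ i, sfun e r a t i = sfun e r b t i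
    · exact Or.inr (Or.inr ⟨t, hat, hbt, hall⟩)
    · push_neg at hall
      obtain ⟨i0, hi0⟩ := hall
      set D := (Finset.range M).filter (fun i => sfun e r a t i ≠ sfun e r b t i) with hD
      have hi0M : i0 < M := by
        by_contra hc
        push_neg at hc
        obtain ⟨h1, h2⟩ := hzero i0 hc
        omega
      have hDne : D.Nonempty := ⟨i0, by simp [hD, Finset.mem_filter, hi0M, hi0]⟩
      set j := D.max' hDne with hj
      have hjD : j ∈ D := D.max'_mem hDne
      have hjne : sfun e r a t j ≠ sfun e r b t j := by
        have := Finset.mem_filter.mp hjD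
        exact this.2
      have habove : ∀ i, j < i → sfun e r a t i = sfun e r b t i := by
        intro i hi
        by_contra hc
        rcases lt_or_ge i M with hiM | hiM
        · have : i ∈ D := Finset.mem_filter.mpr ⟨Finset.mem_range.mpr hiM, hc⟩
          have := D.le_max' i this
          omega
        · obtain ⟨h1, h2⟩ := hzero i hiM
          omega
      rcases Nat.lt_or_ge (sfun e r b t j) (sfun e r a t j) with h | h
      · exact Or.inl ⟨t, j, hat, hbt, habove, h⟩
      · have h' : sfun e r a t j < sfun e r b t j := by omega
        exact Or.inr (Or.inl ⟨t, j, hbt, hat, fun i hi => (habove i hi).symm, h'⟩)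
end

section
/- Two partitions λ and μ satisfy λ ∼_r μ if and only if μ can be obtained from λ by adding some set of indent r-nodes and removing some set of removable r-nodes, i.e., μ = λ with some subset X of indent r-nodes added and some subset Y of removable r-nodes removed. -/
open scoped Classical

/-- Membership of the (0-indexed) node `(i, j)` in the Young diagram of `λ`. -/
def inDiag (l : PartitionSeq) (x : ℕ × ℕ) : Prop := x.2 < l.part x.1

/-- `(i, j)` is a removable node of `λ` (its removal leaves a partition). -/
def IsRemovable (l : PartitionSeq) (x : ℕ × ℕ) : Prop :=
  0 < l.part x.1 ∧ x.2 = l.part x.1 - 1 ∧ l.part (x.1 + 1) < l.part x.1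

/-- `(i, j)` is an indent (addable) node of `λ`. -/
def IsIndent (l : PartitionSeq) (x : ℕ × ℕ) : Prop :=
  x.2 = l.part x.1 ∧ (x.1 = 0 ∨ l.part x.1 < l.part (x.1 - 1))

/-- The `e`-residue of the node `(i, j)` (0-indexed): `j − i mod e`. -/
def resOf (e : ℕ) (x : ℕ × ℕ) : ZMod e := (x.2 : ZMod e) - (x.1 : ZMod e)

section Aux
open Finset

variable {e : ℕ} {r : ZMod e} {l m : PartitionSeq} {t : ℕ}

/-- The `i`-th β-number. -/
def fB (l : PartitionSeq) (t i : ℕ) : ℕ := l.part i + (t - 1 - i)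

lemma betaSet_eq (l : PartitionSeq) (t : ℕ) :
    betaSet l t = (Finset.range t).image (fB l t) := rfl

lemma fB_lt {i j : ℕ} (hij : i < j) (hj : j < t) : fB l t j < fB l t i := by
  have h1 : l.part j ≤ l.part i := l.antitone' i j hij.le
  unfold fB; omega

lemma fB_le {i j : ℕ} (hij : i ≤ j) (hj : j < t) : fB l t j ≤ fB l t i := by
  rcases Nat.lt_or_ge i j with h | h
  · exact (fB_lt h hj).le
  · have : i = j := by omega
    subst this; exact le_rfl

lemma cardInterBeta (l : PartitionSeq) (t : ℕ) (S : Finset ℕ) :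
    (betaSet l t ∩ S).card = ((Finset.range t).filter (fun k => fB l t k ∈ S)).card := by
  have h : betaSet l t ∩ S = ((Finset.range t).filter (fun k => fB l t k ∈ S)).image (fB l t) := by
    ext x
    simp only [betaSet_eq, mem_inter, mem_image, mem_filter, mem_range]
    constructor
    · rintro ⟨⟨i, hi, rfl⟩, hx⟩; exact ⟨i, ⟨hi, hx⟩, rfl⟩
    · rintro ⟨i, ⟨hi, hx⟩, rfl⟩; exact ⟨⟨i, hi, rfl⟩, hx⟩
  rw [h, card_image_of_injOn]
  intro a ha b hb hab
  simp only [coe_filter, Set.mem_setOf_eq, mem_range] at ha hb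
  rcases Nat.lt_trichotomy a b with h' | h' | h'
  · have := fB_lt (l := l) h' hb.1; omega
  · exact h'
  · have := fB_lt (l := l) h' ha.1; omega

/-- Closeness of the two β-sequences in row `i`. -/
def Pclose (e : ℕ) (r : ZMod e) (l m : PartitionSeq) (t i : ℕ) : Prop :=
  fB m t i = fB l t i ∨
    (fB m t i = fB l t i + 1 ∧ ((fB l t i : ZMod e) = r - 1 + t)) ∨
    (fB l t i = fB m t i + 1 ∧ ((fB m t i : ZMod e) = r - 1 + t))

lemma cast_succ_ne {e : ℕ} (he : 2 ≤ e) {s : ZMod e} {j a : ℕ}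
    (hj : (j : ZMod e) = s) (hja : a = j + 1) (ha : (a : ZMod e) = s) : False := by
  haveI : Fact (1 < e) := ⟨he⟩
  have h : ((a : ℕ) : ZMod e) = (j : ZMod e) + 1 := by rw [hja]; push_cast; ring
  rw [ha, hj] at h
  exact (one_ne_zero (α := ZMod e)) (by linear_combination -h)

lemma key_pair {e : ℕ} (he : 2 ≤ e) {s : ZMod e} {a b j : ℕ}
    (hP : b = a ∨ (b = a + 1 ∧ (a : ZMod e) = s) ∨ (a = b + 1 ∧ (b : ZMod e) = s))
    (hj : (j : ZMod e) = s) : (a = j ∨ a = j + 1) ↔ (b = j ∨ b = j + 1) := by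
  rcases hP with rfl | ⟨hba, ha⟩ | ⟨hab, hb⟩
  · exact Iff.rfl
  · constructor
    · rintro (rfl | rfl)
      · right; omega
      · exact absurd ha (fun h => cast_succ_ne he hj rfl h)
    · rintro (rfl | h)
      · exact absurd hj (fun h => cast_succ_ne he ha hba h)
      · left; omega
  · constructor
    · rintro (rfl | h)
      · exact absurd hj (fun h => cast_succ_ne he hb hab h)
      · left; omega
    · rintro (rfl | rfl)
      · right; omega
      · exact absurd hb (fun h => cast_succ_ne he hj rfl h)

lemma key_single {e : ℕ} (he : 2 ≤ e) {s : ZMod e} {a b j : ℕ}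
    (hP : b = a ∨ (b = a + 1 ∧ (a : ZMod e) = s) ∨ (a = b + 1 ∧ (b : ZMod e) = s))
    (hj1 : (j : ZMod e) ≠ s) (hj2 : (j : ZMod e) ≠ s + 1) : a = j ↔ b = j := by
  rcases hP with rfl | ⟨hba, ha⟩ | ⟨hab, hb⟩
  · exact Iff.rfl
  · constructor
    · rintro rfl; exact absurd ha (fun h => hj1 h)
    · rintro rfl
      exfalso; apply hj2
      have : ((b : ℕ) : ZMod e) = (a : ZMod e) + 1 := by rw [hba]; push_cast; ring
      rw [ha] at this; exact this
  · constructor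
    · rintro rfl
      exfalso; apply hj2
      have : ((a : ℕ) : ZMod e) = (b : ZMod e) + 1 := by rw [hab]; push_cast; ring
      rw [hb] at this; exact this
    · rintro rfl; exact absurd hb (fun h => hj1 h)

lemma key_zero {e : ℕ} (he : 2 ≤ e) {s : ZMod e} {a b : ℕ}
    (hP : b = a ∨ (b = a + 1 ∧ (a : ZMod e) = s) ∨ (a = b + 1 ∧ (b : ZMod e) = s))
    (h0 : ((0 : ℕ) : ZMod e) = s + 1) : a = 0 ↔ b = 0 := by
  haveI : Fact (1 < e) := ⟨he⟩
  rcases hP with rfl | ⟨hba, ha⟩ | ⟨hab, hb⟩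
  · exact Iff.rfl
  · constructor
    · rintro rfl
      rw [ha] at h0
      exact absurd (by linear_combination -h0) (one_ne_zero (α := ZMod e))
    · intro h; omega
  · constructor
    · intro h; omega
    · rintro rfl
      rw [hb] at h0
      exact absurd (by linear_combination -h0) (one_ne_zero (α := ZMod e))

lemma sfun_eq_of_close (he : 2 ≤ e) (hP : ∀ i < t, Pclose e r l m t i) (j : ℕ) :
    sfun e r l t j = sfun e r m t j := by
  haveI : Fact (1 < e) := ⟨he⟩
  set s : ZMod e := r - 1 + (t : ZMod e) with hs
  have hs1 : s + 1 = r + (t : ZMod e) := by rw [hs]; ring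
  unfold sfun
  split_ifs with h1 h2
  · -- j ≡ r - 1 + t
    have hj : (j : ZMod e) = s := by rw [hs]; rw [sub_eq_iff_eq_add] at h1; rw [h1]
    rw [cardInterBeta, cardInterBeta]
    congr 1
    apply Finset.filter_congr
    intro i hi
    simp only [Finset.mem_range] at hi
    have hP' := hP i hi
    simp only [Finset.mem_insert, Finset.mem_singleton]
    unfold Pclose at hP'
    exact key_pair he hP' hj
  · -- j ≡ r + t
    have hj : (j : ZMod e) = s + 1 := by
      rw [hs1]; rw [sub_eq_iff_eq_add] at h2; rw [h2]
    rcases Nat.eq_zero_or_pos j with rfl | hpos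
    · have hset : ({0, 0 - 1} : Finset ℕ) = {0} := by norm_num
      rw [hset, cardInterBeta, cardInterBeta]
      congr 1
      apply Finset.filter_congr
      intro i hi
      simp only [Finset.mem_range] at hi
      simp only [Finset.mem_singleton]
      have hP' := hP i hi
      unfold Pclose at hP'
      exact key_zero he hP' hj
    · obtain ⟨j', rfl⟩ : ∃ j', j = j' + 1 := ⟨j - 1, by omega⟩
      have hj' : (j' : ZMod e) = s := by
        have : ((j' + 1 : ℕ) : ZMod e) = (j' : ZMod e) + 1 := by push_cast; ring
        rw [this] at hj
        exact add_right_cancel hj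
      rw [cardInterBeta, cardInterBeta]
      congr 1
      apply Finset.filter_congr
      intro i hi
      simp only [Finset.mem_range] at hi
      have hP' := hP i hi
      unfold Pclose at hP'
      have hkey := key_pair he hP' hj'
      simp only [Finset.mem_insert, Finset.mem_singleton]
      constructor
      · intro h
        have : fB l t i = j' ∨ fB l t i = j' + 1 := by omega
        have := hkey.mp this
        omega
      · intro h
        have : fB m t i = j' ∨ fB m t i = j' + 1 := by omega
        have := hkey.mpr this
        omega
  · -- other residues
    have hj1 : (j : ZMod e) ≠ s := by
      intro h; apply h1; rw [hs] at h; rw [sub_eq_iff_eq_add]; rw [h]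
    have hj2 : (j : ZMod e) ≠ s + 1 := by
      intro h; apply h2; rw [hs1] at h; rw [sub_eq_iff_eq_add]; rw [h]
    rw [cardInterBeta, cardInterBeta]
    congr 1
    apply Finset.filter_congr
    intro i hi
    simp only [Finset.mem_range] at hi
    simp only [Finset.mem_singleton]
    have hP' := hP i hi
    unfold Pclose at hP'
    exact key_single he hP' hj1 hj2

end Aux
section Cnt
open Finset

variable {e : ℕ} {r : ZMod e} {l m : PartitionSeq} {t : ℕ}

/-- Number of β-numbers that are `≥ n`. -/
def cnt (l : PartitionSeq) (t n : ℕ) : ℕ :=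
  ((Finset.range t).filter (fun i => n ≤ fB l t i)).card

lemma cnt_eq_zero {n : ℕ} (h : l.part 0 + t ≤ n) : cnt l t n = 0 := by
  unfold cnt
  rw [Finset.card_eq_zero, Finset.filter_eq_empty_iff]
  intro i hi
  simp only [Finset.mem_range] at hi
  have h0 : l.part i ≤ l.part 0 := l.antitone' 0 i (Nat.zero_le i)
  unfold fB
  omega

lemma cnt_succ (l : PartitionSeq) (t n : ℕ) :
    cnt l t n = cnt l t (n + 1) + (betaSet l t ∩ {n}).card := by
  rw [cardInterBeta]
  unfold cnt
  have h : (Finset.range t).filter (fun i => n ≤ fB l t i) =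
      ((Finset.range t).filter (fun i => n + 1 ≤ fB l t i)) ∪
        ((Finset.range t).filter (fun i => fB l t i ∈ ({n} : Finset ℕ))) := by
    rw [← Finset.filter_or]
    apply Finset.filter_congr
    intro i _
    simp only [Finset.mem_singleton]
    omega
  rw [h, Finset.card_union_of_disjoint]
  rw [Finset.disjoint_left]
  intro a ha hb
  simp only [Finset.mem_filter, Finset.mem_singleton] at ha hb
  omega

lemma cnt_succ2 (l : PartitionSeq) (t n : ℕ) :
    cnt l t n = cnt l t (n + 2) + (betaSet l t ∩ {n, n + 1}).card := by
  rw [cardInterBeta]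
  unfold cnt
  have h : (Finset.range t).filter (fun i => n ≤ fB l t i) =
      ((Finset.range t).filter (fun i => n + 2 ≤ fB l t i)) ∪
        ((Finset.range t).filter (fun i => fB l t i ∈ ({n, n + 1} : Finset ℕ))) := by
    rw [← Finset.filter_or]
    apply Finset.filter_congr
    intro i _
    simp only [Finset.mem_insert, Finset.mem_singleton]
    omega
  rw [h, Finset.card_union_of_disjoint]
  rw [Finset.disjoint_left]
  intro a ha hb
  simp only [Finset.mem_filter, Finset.mem_insert, Finset.mem_singleton] at ha hb
  omega

lemma lt_cnt_iff {i n : ℕ} (hi : i < t) : n ≤ fB l t i ↔ i < cnt l t n := by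
  constructor
  · intro h
    have hsub : Finset.range (i + 1) ⊆ (Finset.range t).filter (fun k => n ≤ fB l t k) := by
      intro k hk
      simp only [Finset.mem_range] at hk
      simp only [Finset.mem_filter, Finset.mem_range]
      exact ⟨by omega, le_trans h (fB_le (by omega) hi)⟩
    have := Finset.card_le_card hsub
    simp only [Finset.card_range] at this
    unfold cnt
    omega
  · intro h
    by_contra hn
    push_neg at hn
    have hsub : (Finset.range t).filter (fun k => n ≤ fB l t k) ⊆ Finset.range i := by
      intro k hk
      simp only [Finset.mem_filter, Finset.mem_range] at hk
      simp only [Finset.mem_range]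
      by_contra hk2
      push_neg at hk2
      have := fB_le (l := l) hk2 hk.1
      omega
    have := Finset.card_le_card hsub
    simp only [Finset.card_range] at this
    unfold cnt at h
    omega

lemma cnt_eq_of_sfun (he : 2 ≤ e) (hs : ∀ j, sfun e r l t j = sfun e r m t j) :
    ∀ n : ℕ, ((n : ZMod e) ≠ r + t) → cnt l t n = cnt m t n := by
  haveI : Fact (1 < e) := ⟨he⟩
  set N : ℕ := l.part 0 + m.part 0 + t with hN
  suffices h : ∀ d n : ℕ, N ≤ n + d → ((n : ZMod e) ≠ r + t) → cnt l t n = cnt m t n by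
    intro n hn
    exact h N n (by omega) hn
  intro d
  induction d with
  | zero =>
    intro n hn _
    rw [cnt_eq_zero (by omega), cnt_eq_zero (by omega)]
  | succ d ih =>
    intro n hn hres
    by_cases hbig : N ≤ n
    · rw [cnt_eq_zero (by omega), cnt_eq_zero (by omega)]
    by_cases h1 : (n : ZMod e) = r - 1 + t
    · -- use the pair
      rw [cnt_succ2, cnt_succ2 m]
      have hpair : (betaSet l t ∩ {n, n + 1}).card = (betaSet m t ∩ {n, n + 1}).card := by
        have hcond : ((n : ZMod e) - t) = r - 1 := by rw [sub_eq_iff_eq_add, h1]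
        have := hs n
        rw [sfun, sfun, if_pos hcond, if_pos hcond] at this
        exact this
      have hres2 : ((n + 2 : ℕ) : ZMod e) ≠ r + t := by
        intro h
        push_cast at h
        apply (one_ne_zero (α := ZMod e))
        rw [h1] at h
        linear_combination h
      rw [ih (n + 2) (by omega) hres2, hpair]
    · -- use the singleton
      rw [cnt_succ, cnt_succ m]
      have hsing : (betaSet l t ∩ {n}).card = (betaSet m t ∩ {n}).card := by
        have hcond1 : ¬ ((n : ZMod e) - t) = r - 1 := by
          intro h; apply h1; rw [sub_eq_iff_eq_add] at h; rw [h]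
        have hcond2 : ¬ ((n : ZMod e) - t) = r := by
          intro h; apply hres; rw [sub_eq_iff_eq_add] at h; rw [h]
        have := hs n
        rw [sfun, sfun, if_neg hcond1, if_neg hcond1, if_neg hcond2, if_neg hcond2] at this
        exact this
      have hres1 : ((n + 1 : ℕ) : ZMod e) ≠ r + t := by
        intro h
        push_cast at h
        apply h1
        linear_combination h
      rw [ih (n + 1) (by omega) hres1, hsing]

end Cnt
section Close
open Finset

variable {e : ℕ} {r : ZMod e} {l m : PartitionSeq} {t : ℕ}

lemma close_of_cnt (he : 2 ≤ e)
    (hc : ∀ n : ℕ, ((n : ZMod e) ≠ r + t) → cnt l t n = cnt m t n) :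
    ∀ i < t, Pclose e r l m t i := by
  haveI : Fact (1 < e) := ⟨he⟩
  intro i hi
  have key : ∀ n : ℕ, ((n : ZMod e) ≠ r + t) → (n ≤ fB l t i ↔ n ≤ fB m t i) := by
    intro n hn
    rw [lt_cnt_iff hi, lt_cnt_iff hi, hc n hn]
  set a := fB l t i with ha
  set b := fB m t i with hb
  have two_cons : ∀ n : ℕ, ((n : ZMod e) = r + t) → (((n + 1 : ℕ)) : ZMod e) ≠ r + t := by
    intro n h hcontra
    push_cast at hcontra
    rw [h] at hcontra
    exact (one_ne_zero (α := ZMod e)) (by linear_combination hcontra)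
  have hba : b ≤ a + 1 := by
    by_contra hgt
    push_neg at hgt
    by_cases h : ((a + 1 : ℕ) : ZMod e) = r + t
    · have h2 := two_cons _ h
      have h3 : a + 1 + 1 = a + 2 := by omega
      rw [h3] at h2
      have := (key (a + 2) h2).mpr (by omega)
      omega
    · have := (key (a + 1) h).mpr (by omega)
      omega
  have hab : a ≤ b + 1 := by
    by_contra hgt
    push_neg at hgt
    by_cases h : ((b + 1 : ℕ) : ZMod e) = r + t
    · have h2 := two_cons _ h
      have h3 : b + 1 + 1 = b + 2 := by omega
      rw [h3] at h2
      have := (key (b + 2) h2).mp (by omega)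
      omega
    · have := (key (b + 1) h).mp (by omega)
      omega
  rcases Nat.lt_trichotomy a b with h | h | h
  · right; left
    have hb1 : b = a + 1 := by omega
    refine ⟨hb1, ?_⟩
    by_contra hres
    have hne : ((a + 1 : ℕ) : ZMod e) ≠ r + t := by
      intro hcontra
      apply hres
      push_cast at hcontra
      linear_combination hcontra
    have := (key (a + 1) hne).mpr (by omega)
    omega
  · left; omega
  · right; right
    have hb1 : a = b + 1 := by omega
    refine ⟨hb1, ?_⟩
    by_contra hres
    have hne : ((b + 1 : ℕ) : ZMod e) ≠ r + t := by
      intro hcontra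
      apply hres
      push_cast at hcontra
      linear_combination hcontra
    have := (key (b + 1) hne).mp (by omega)
    omega

lemma part_eq_zero_of_len_le (l : PartitionSeq) {i : ℕ} (h : l.len ≤ i) : l.part i = 0 := by
  have hne : {N | ∀ j : ℕ, N ≤ j → l.part j = 0}.Nonempty := by
    obtain ⟨N, hN⟩ := l.finite'
    exact ⟨N, hN⟩
  exact Nat.sInf_mem hne i h

lemma fB_res {i : ℕ} (hi : i < t) :
    ((fB l t i : ℕ) : ZMod e) = r - 1 + t ↔ ((l.part i : ZMod e) - (i : ZMod e) = r) := by
  have h1 : 1 ≤ t := by omega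
  have h2 : i ≤ t - 1 := by omega
  have hcast : ((fB l t i : ℕ) : ZMod e) =
      (l.part i : ZMod e) + (t : ZMod e) - 1 - (i : ZMod e) := by
    unfold fB
    push_cast [Nat.cast_sub h2, Nat.cast_sub h1]
    ring
  rw [hcast]
  constructor
  · intro h; linear_combination h
  · intro h; linear_combination h

end Close
section Directions
open Finset

variable {e : ℕ} {r : ZMod e} {l m : PartitionSeq}

lemma simr_to_nodes (he : 2 ≤ e) (h : simr e r l m) :
    ∃ X Y : Finset (ℕ × ℕ),
      (∀ x ∈ X, IsIndent l x ∧ resOf e x = r) ∧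
      (∀ y ∈ Y, IsRemovable l y ∧ resOf e y = r) ∧
      (∀ p : ℕ × ℕ, inDiag m p ↔ ((inDiag l p ∧ p ∉ Y) ∨ p ∈ X)) := by
  obtain ⟨t, hlt, hmt, hs⟩ := h
  have hP : ∀ i < t, Pclose e r l m t i :=
    close_of_cnt he (cnt_eq_of_sfun he hs)
  refine ⟨((Finset.range t).filter (fun i => m.part i = l.part i + 1)).image
            (fun i => (i, l.part i)),
          ((Finset.range t).filter (fun i => l.part i = m.part i + 1)).image
            (fun i => (i, l.part i - 1)), ?_, ?_, ?_⟩
  · -- X consists of indent r-nodes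
    intro x hx
    simp only [Finset.mem_image, Finset.mem_filter, Finset.mem_range] at hx
    obtain ⟨i, ⟨hi, hparts⟩, rfl⟩ := hx
    have hPi := hP i hi
    unfold Pclose at hPi
    have hres : ((fB l t i : ℕ) : ZMod e) = r - 1 + t := by
      rcases hPi with h' | ⟨-, h'⟩ | ⟨h', -⟩
      · unfold fB at h'; omega
      · exact h'
      · unfold fB at h'; omega
    constructor
    · constructor
      · rfl
      · by_cases hi0 : i = 0
        · exact Or.inl hi0
        · right
          show l.part i < l.part (i - 1)
          by_contra hnot
          push_neg at hnot
          have heq : l.part (i - 1) = l.part i :=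
            le_antisymm hnot (l.antitone' (i - 1) i (by omega))
          have hPi' := hP (i - 1) (by omega)
          unfold Pclose at hPi'
          have hmanti := m.antitone' (i - 1) i (by omega)
          rcases hPi' with h' | ⟨h', hres2⟩ | ⟨h', -⟩
          · unfold fB at h'; omega
          · have hstep : fB l t (i - 1) = fB l t i + 1 := by unfold fB; omega
            exact cast_succ_ne he hres hstep hres2
          · unfold fB at h'; omega
    · show (l.part i : ZMod e) - (i : ZMod e) = r
      exact (fB_res hi).mp hres
  · -- Y consists of removable r-nodes
    intro y hy
    simp only [Finset.mem_image, Finset.mem_filter, Finset.mem_range] at hy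
    obtain ⟨i, ⟨hi, hparts⟩, rfl⟩ := hy
    have hPi := hP i hi
    unfold Pclose at hPi
    have hres : ((fB m t i : ℕ) : ZMod e) = r - 1 + t := by
      rcases hPi with h' | ⟨h', -⟩ | ⟨-, h'⟩
      · unfold fB at h'; omega
      · unfold fB at h'; omega
      · exact h'
    constructor
    · refine ⟨show 0 < l.part i by omega, rfl, ?_⟩
      show l.part (i + 1) < l.part i
      by_contra hnot
      push_neg at hnot
      have heq : l.part (i + 1) = l.part i :=
        le_antisymm (l.antitone' i (i + 1) (by omega)) hnot
      by_cases hi1 : i + 1 < t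
      · have hPi' := hP (i + 1) hi1
        unfold Pclose at hPi'
        have hmanti := m.antitone' i (i + 1) (by omega)
        rcases hPi' with h' | ⟨h', -⟩ | ⟨h', hres2⟩
        · unfold fB at h'; omega
        · unfold fB at h'; omega
        · unfold fB at h'
          have hstep : fB m t i = fB m t (i + 1) + 1 := by unfold fB; omega
          exact cast_succ_ne he hres2 hstep hres
      · have := part_eq_zero_of_len_le l (show l.len ≤ i + 1 by omega)
        omega
    · show ((l.part i - 1 : ℕ) : ZMod e) - (i : ZMod e) = r
      have heq : l.part i - 1 = m.part i := by omega
      rw [heq]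
      exact (fB_res hi).mp hres
  · -- the diagram condition
    rintro ⟨i, j⟩
    have hXc : ((i, j) ∈ ((Finset.range t).filter
        (fun k => m.part k = l.part k + 1)).image (fun k => (k, l.part k))) ↔
        (i < t ∧ m.part i = l.part i + 1 ∧ j = l.part i) := by
      simp only [Finset.mem_image, Finset.mem_filter, Finset.mem_range, Prod.mk.injEq]
      constructor
      · rintro ⟨k, ⟨hk, hpk⟩, rfl, rfl⟩; exact ⟨hk, hpk, rfl⟩
      · rintro ⟨hk, hpk, rfl⟩; exact ⟨i, ⟨hk, hpk⟩, rfl, rfl⟩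
    have hYc : ((i, j) ∈ ((Finset.range t).filter
        (fun k => l.part k = m.part k + 1)).image (fun k => (k, l.part k - 1))) ↔
        (i < t ∧ l.part i = m.part i + 1 ∧ j = l.part i - 1) := by
      simp only [Finset.mem_image, Finset.mem_filter, Finset.mem_range, Prod.mk.injEq]
      constructor
      · rintro ⟨k, ⟨hk, hpk⟩, rfl, rfl⟩; exact ⟨hk, hpk, rfl⟩
      · rintro ⟨hk, hpk, rfl⟩; exact ⟨i, ⟨hk, hpk⟩, rfl, rfl⟩
    rw [hXc, hYc]
    simp only [inDiag]
    by_cases hit : i < t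
    · have hPi := hP i hit
      unfold Pclose at hPi
      rcases hPi with h' | ⟨h', -⟩ | ⟨h', -⟩ <;> (unfold fB at h'; omega)
    · have h1 : l.part i = 0 := part_eq_zero_of_len_le l (by omega)
      have h2 : m.part i = 0 := part_eq_zero_of_len_le m (by omega)
      omega

end Directions
section Forward
open Finset

variable {e : ℕ} {r : ZMod e} {l m : PartitionSeq}

lemma nodes_to_simr (he : 2 ≤ e) (X Y : Finset (ℕ × ℕ))
    (hX : ∀ x ∈ X, IsIndent l x ∧ resOf e x = r)
    (hY : ∀ y ∈ Y, IsRemovable l y ∧ resOf e y = r)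
    (hD : ∀ p : ℕ × ℕ, inDiag m p ↔ ((inDiag l p ∧ p ∉ Y) ∨ p ∈ X)) :
    simr e r l m := by
  set t := max l.len m.len with ht
  have hlt : l.len ≤ t := le_max_left _ _
  have hmt : m.len ≤ t := le_max_right _ _
  have tri : ∀ i : ℕ, (m.part i = l.part i + 1 ∧ (i, l.part i) ∈ X) ∨
      (m.part i = l.part i) ∨
      (l.part i = m.part i + 1 ∧ (i, l.part i - 1) ∈ Y ∧ 0 < l.part i) := by
    intro i
    by_cases hx : (i, l.part i) ∈ X
    · left
      refine ⟨?_, hx⟩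
      have h1 : inDiag m (i, l.part i) := (hD _).mpr (Or.inr hx)
      have h2 : ¬ inDiag m (i, l.part i + 1) := by
        rw [hD]
        rintro (⟨hdl, -⟩ | hX2)
        · simp only [inDiag] at hdl; omega
        · have h3 := (hX _ hX2).1.1
          simp only at h3; omega
      simp only [inDiag] at h1 h2
      omega
    · by_cases hy : (i, l.part i - 1) ∈ Y
      · right; right
        have hpos : 0 < l.part i := (hY _ hy).1.1
        refine ⟨?_, hy, hpos⟩
        have h2 : ¬ inDiag m (i, l.part i - 1) := by
          rw [hD]
          rintro (⟨-, hny⟩ | hX2)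
          · exact hny hy
          · have h3 := (hX _ hX2).1.1
            simp only at h3; omega
        have h3 : l.part i ≤ 1 ∨ inDiag m (i, l.part i - 2) := by
          rcases le_or_gt (l.part i) 1 with h | h
          · exact Or.inl h
          · right
            rw [hD]
            left
            refine ⟨by simp only [inDiag]; omega, ?_⟩
            intro hy2
            have h4 := (hY _ hy2).1.2.1
            simp only at h4; omega
        simp only [inDiag] at h2 h3
        omega
      · right; left
        have hcol : ∀ j : ℕ, j < m.part i ↔ j < l.part i := by
          intro j
          have hd := hD (i, j)
          simp only [inDiag] at hd
          rw [hd]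
          constructor
          · rintro (⟨hdl, -⟩ | hX2)
            · exact hdl
            · have h1 := (hX _ hX2).1.1
              simp only at h1
              exfalso; apply hx
              rw [← h1]; exact hX2
          · intro hj
            left
            refine ⟨hj, ?_⟩
            intro hy2
            have h1 := (hY _ hy2).1.2.1
            simp only at h1
            apply hy
            rw [← h1]; exact hy2
        have hc1 := hcol (m.part i)
        have hc2 := hcol (l.part i)
        omega
  have hP : ∀ i < t, Pclose e r l m t i := by
    intro i hit
    rcases tri i with ⟨hm, hx⟩ | hm | ⟨hm, hy, hpos⟩
    · right; left
      constructor
      · unfold fB; omega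
      · rw [fB_res hit]
        have hres := (hX _ hx).2
        simp only [resOf] at hres
        exact hres
    · left; unfold fB; omega
    · right; right
      constructor
      · unfold fB; omega
      · rw [fB_res hit]
        have hres := (hY _ hy).2
        simp only [resOf] at hres
        have heq : l.part i - 1 = m.part i := by omega
        rw [heq] at hres
        exact hres
  exact ⟨t, hlt, hmt, fun j => sfun_eq_of_close he hP j⟩

end Forward

theorem simr_iff_move_r_nodes' (e : ℕ) (he : 2 ≤ e) (r : ZMod e)
    (l m : PartitionSeq) :
    simr e r l m ↔
      ∃ X Y : Finset (ℕ × ℕ),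
        (∀ x ∈ X, IsIndent l x ∧ resOf e x = r) ∧
        (∀ y ∈ Y, IsRemovable l y ∧ resOf e y = r) ∧
        (∀ p : ℕ × ℕ, inDiag m p ↔ ((inDiag l p ∧ p ∉ Y) ∨ p ∈ X)) := by
  constructor
  · exact simr_to_nodes he
  · rintro ⟨X, Y, hX, hY, hD⟩
    exact nodes_to_simr he X Y hX hY hD

/-- `λ ∼_r μ` if and only if `μ` is obtained from `λ` by adding a set `X` of
indent `r`-nodes and removing a set `Y` of removable `r`-nodes. -/
theorem simr_iff_move_r_nodes (e : ℕ) (he : 2 ≤ e) (r : ZMod e)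
    (l m : PartitionSeq) :
    simr e r l m ↔
      ∃ X Y : Finset (ℕ × ℕ),
        (∀ x ∈ X, IsIndent l x ∧ resOf e x = r) ∧
        (∀ y ∈ Y, IsRemovable l y ∧ resOf e y = r) ∧
        (∀ p : ℕ × ℕ, inDiag m p ↔ ((inDiag l p ∧ p ∉ Y) ∨ p ∈ X)) := by
  exact simr_iff_move_r_nodes' e he r l m
end
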